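/- Let Φ : ℝ^n → ℝ^m be differentiable at x̄, let V : ℝ^m → ℝ be differentiable, and let V* : ℝ^m → ℝ be differentiable at σ̄ ∈ ℝ^m with ∇V(∇V*(σ̄)) = σ̄. Suppose the pair (x̄, σ̄) satisfies the stationarity conditions of the augmented function: Φ(x̄) = ∇V*(σ̄), and ⟨DΦ(x̄)[d], σ̄⟩ = 0 for every direction d ∈ ℝ^n. Then σ̄ = ∇V(Φ(x̄)) and the composite function f = V ∘ Φ has zero derivative at x̄ (i.e., the Fréchet derivative Df(x̄) is the zero map). -/

import Mathlib

open scoped RealInnerProductSpace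

/-- Necessity direction of Theorem 2: a stationary point of the augmented
function `L(x, σ) = ⟪Φ x, σ⟫ - V* σ` yields a stationary point of `f = V ∘ Φ`. -/
theorem stationary_of_augmented_stationary {n m : ℕ}
    (V Vstar : EuclideanSpace ℝ (Fin m) → ℝ)
    (Φ : EuclideanSpace ℝ (Fin n) → EuclideanSpace ℝ (Fin m))
    (xb : EuclideanSpace ℝ (Fin n))
    (σb : EuclideanSpace ℝ (Fin m))
    (DΦ : EuclideanSpace ℝ (Fin n) →L[ℝ] EuclideanSpace ℝ (Fin m))
    (gradV : EuclideanSpace ℝ (Fin m) → EuclideanSpace ℝ (Fin m))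
    (gradVstar : EuclideanSpace ℝ (Fin m))
    -- Φ is differentiable at xb with Fréchet derivative DΦ
    (hΦ : HasFDerivAt Φ DΦ xb)
    -- V is differentiable (everywhere) with gradient gradV
    (hV : ∀ y, HasGradientAt V (gradV y) y)
    -- V* is differentiable at σb with gradient ∇V*(σb) = gradVstar
    (hVstar : HasGradientAt Vstar gradVstar σb)
    -- ∇V(∇V*(σb)) = σb
    (hinv : gradV gradVstar = σb)
    -- stationarity in σ : Φ(xb) = ∇V*(σb)
    (hstatσ : Φ xb = gradVstar)
    -- stationarity in x : ⟪DΦ(xb)[d], σb⟫ = 0 for every direction d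
    (hstatx : ∀ d : EuclideanSpace ℝ (Fin n), ⟪DΦ d, σb⟫ = 0) :
    σb = gradV (Φ xb) ∧
      HasFDerivAt (fun x => V (Φ x))
        (0 : EuclideanSpace ℝ (Fin n) →L[ℝ] ℝ) xb := by
  have h1 : σb = gradV (Φ xb) := by rw [hstatσ, hinv]
  refine ⟨h1, ?_⟩
  have hVf : HasFDerivAt V ((InnerProductSpace.toDual ℝ _ (gradV (Φ xb))) :
      EuclideanSpace ℝ (Fin m) →L[ℝ] ℝ) (Φ xb) := (hV (Φ xb)).hasFDerivAt
  have hcomp := hVf.comp xb hΦ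
  refine hcomp.congr_fderiv ?_
  ext d
  have h2 := hstatx d
  rw [real_inner_comm] at h2
  simpa [InnerProductSpace.toDual_apply_apply, ← h1, PiLp.inner_apply] using h2
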